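/- arXiv:1307.1981 — 14 statements merged into one kernel-verified Lean document; each statement's English description precedes it below -/
import Mathlib

section
/- If H is an n×n matrix with entries ±1 such that H Hᵀ ≡ n·I (mod m), with n ≥ 3 and m ≡ 0 (mod 4), then n ≡ 0 (mod 4). -/
open Matrix

/-- `H` is an `m`-modular Hadamard matrix of order `n`: a ±1 matrix with
`H * Hᵀ ≡ n • I (mod m)`. -/
def IsMHadamard (m n : ℕ) {ι : Type} [Fintype ι] [DecidableEq ι]
    (H : Matrix ι ι ℤ) : Prop :=
  (∀ i j, H i j = 1 ∨ H i j = -1) ∧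
  ∀ i j, (H * Hᵀ) i j ≡ (if i = j then (n : ℤ) else 0) [ZMOD m]

theorem stmt_1 (m n : ℕ) (hn : 3 ≤ n) (hm : m % 4 = 0)
    (H : Matrix (Fin n) (Fin n) ℤ) (hH : IsMHadamard m n H) : n % 4 = 0 := by
  obtain ⟨hpm, hmod⟩ := hH
  have h4m : (4:ℤ) ∣ (m:ℤ) := by
    have : 4 ∣ m := Nat.dvd_of_mod_eq_zero hm
    exact_mod_cast Int.natCast_dvd_natCast.mpr this
  set i0 : Fin n := ⟨0, by omega⟩ with hi0
  set i1 : Fin n := ⟨1, by omega⟩ with hi1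
  set i2 : Fin n := ⟨2, by omega⟩ with hi2
  have hd : ∀ a b : Fin n, a ≠ b → (4:ℤ) ∣ ∑ j, H a j * H b j := by
    intro a b hab
    have h := hmod a b
    rw [if_neg hab] at h
    have hm' : (m:ℤ) ∣ (H * Hᵀ) a b := Int.modEq_zero_iff_dvd.mp h
    have : (H * Hᵀ) a b = ∑ j, H a j * H b j := by
      simp [Matrix.mul_apply, Matrix.transpose_apply]
    rw [this] at hm'
    exact dvd_trans h4m hm'
  -- key sum
  have hsum : ∑ j, (H i0 j + H i1 j) * (H i0 j + H i2 j)
      = (n : ℤ) + (∑ j, H i0 j * H i2 j) + (∑ j, H i1 j * H i0 j)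
        + (∑ j, H i1 j * H i2 j) := by
    have h1 : ∀ j, (H i0 j + H i1 j) * (H i0 j + H i2 j)
        = 1 + H i0 j * H i2 j + H i1 j * H i0 j + H i1 j * H i2 j := by
      intro j
      rcases hpm i0 j with h | h <;> rcases hpm i1 j with h' | h' <;>
        rcases hpm i2 j with h'' | h'' <;> rw [h, h', h''] <;> ring
    rw [Finset.sum_congr rfl fun j _ => h1 j]
    simp [Finset.sum_add_distrib, Finset.card_univ]
  have hdvd : (4:ℤ) ∣ ∑ j, (H i0 j + H i1 j) * (H i0 j + H i2 j) := by
    apply Finset.dvd_sum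
    intro j _
    rcases hpm i0 j with h | h <;> rcases hpm i1 j with h' | h' <;>
      rcases hpm i2 j with h'' | h'' <;> rw [h, h', h''] <;> decide
  have h01 : i0 ≠ i1 := by simp [hi0, hi1, Fin.ext_iff]
  have h02 : i0 ≠ i2 := by simp [hi0, hi2, Fin.ext_iff]
  have h12 : i1 ≠ i2 := by simp [hi1, hi2, Fin.ext_iff]
  have hn4 : (4:ℤ) ∣ (n:ℤ) := by
    have := hd i0 i2 h02
    have := hd i1 i0 h01.symm
    have := hd i1 i2 h12
    rw [hsum] at hdvd
    omega
  have : 4 ∣ n := by exact_mod_cast hn4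
  omega
end

section
/- Let H be an m-modular Hadamard matrix of order n ≥ 3 with m odd and n not divisible by m. Let r be the unique integer with 1 ≤ r ≤ m−1 and r ≡ 2^(φ(m)−2)·n (mod m), where φ is Euler's totient function. Then n ≥ 4r. -/
open Matrix

private lemma card_split {n : ℕ} (p q : Fin n → Prop) [DecidablePred p] [DecidablePred q] :
    (Finset.univ.filter p).card =
      (Finset.univ.filter fun j => p j ∧ q j).card +
      (Finset.univ.filter fun j => p j ∧ ¬ q j).card := by
  rw [← Finset.card_filter_add_card_filter_not (s := Finset.univ.filter p) q,
    Finset.filter_filter, Finset.filter_filter]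

theorem stmt_2 (m n : ℕ) (hn : 3 ≤ n) (hm : Odd m) (hm2 : 2 ≤ m)
    (hnm : ¬ m ∣ n) (H : Matrix (Fin n) (Fin n) ℤ) (hH : IsMHadamard m n H)
    (r : ℕ) (hr1 : 1 ≤ r) (hr2 : r ≤ m - 1)
    (hr3 : (r : ℤ) ≡ 2 ^ (Nat.totient m - 2) * n [ZMOD m]) :
    4 * r ≤ n := by
  classical
  obtain ⟨hpm, hmod⟩ := hH
  have hm3 : 3 ≤ m := by rcases hm with ⟨k, hk⟩; omega
  have h2m : Nat.Coprime 2 m := hm.coprime_two_left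
  have ht2 : 2 ≤ m.totient := by
    obtain ⟨k, hk⟩ := Nat.totient_even (show 2 < m by omega)
    have := Nat.totient_pos.mpr (show 0 < m by omega)
    omega
  -- n ≡ 4r mod m, in ZMod m
  have h4r : (n : ZMod m) = 4 * (r : ZMod m) := by
    have h1 : (r : ZMod m) = 2 ^ (m.totient - 2) * n := by
      have := (ZMod.intCast_eq_intCast_iff _ _ m).mpr hr3
      push_cast at this
      exact this
    have h2 : (2 : ZMod m) ^ m.totient = 1 := by
      have h := (ZMod.natCast_eq_natCast_iff _ _ m).mpr (Nat.ModEq.pow_totient h2m)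
      push_cast at h
      exact h
    calc (n : ZMod m) = 2 ^ m.totient * n := by rw [h2, one_mul]
      _ = 2 ^ 2 * (2 ^ (m.totient - 2) * n) := by
          rw [← mul_assoc, ← pow_add]
          congr 2
          omega
      _ = 4 * (r : ZMod m) := by rw [← h1]; norm_num
  -- inner product identity
  have key : ∀ a b : Fin n, a ≠ b →
      2 * (((Finset.univ.filter fun j => H a j = H b j).card : ZMod m)) = (n : ZMod m) := by
    intro a b hab
    have hsum : (∑ j, H a j * H b j) =
        2 * (((Finset.univ.filter fun j => H a j = H b j).card : ℤ)) - n := by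
      have hterm : ∀ j : Fin n, H a j * H b j = if H a j = H b j then 1 else -1 := by
        intro j
        rcases hpm a j with h | h <;> rcases hpm b j with h' | h' <;> simp [h, h']
      rw [Finset.sum_congr rfl fun j _ => hterm j, Finset.sum_ite, Finset.sum_const,
        Finset.sum_const]
      have hcard := Finset.card_filter_add_card_filter_not
        (s := (Finset.univ : Finset (Fin n))) (fun j => H a j = H b j)
      simp only [Finset.card_univ, Fintype.card_fin] at hcard
      simp only [nsmul_eq_mul]
      push_cast
      omega
    have hm0 := hmod a b
    rw [if_neg hab] at hm0
    have h0 : (((∑ j, H a j * H b j : ℤ)) : ZMod m) = 0 := by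
      have := (ZMod.intCast_eq_intCast_iff _ _ m).mpr hm0
      simpa [Matrix.mul_apply, Matrix.transpose_apply] using this
    rw [hsum] at h0
    push_cast at h0
    linear_combination h0
  -- the three rows
  set i0 : Fin n := ⟨0, by omega⟩ with hi0
  set i1 : Fin n := ⟨1, by omega⟩ with hi1
  set i2 : Fin n := ⟨2, by omega⟩ with hi2
  have h01 : i0 ≠ i1 := by simp [hi0, hi1, Fin.ext_iff]
  have h02 : i0 ≠ i2 := by simp [hi0, hi2, Fin.ext_iff]
  have h12 : i1 ≠ i2 := by simp [hi1, hi2, Fin.ext_iff]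
  set p01 : Fin n → Prop := fun j => H i0 j = H i1 j with hp01
  set p02 : Fin n → Prop := fun j => H i0 j = H i2 j with hp02
  set p12 : Fin n → Prop := fun j => H i1 j = H i2 j with hp12
  set A : ℕ := (Finset.univ.filter fun j => p01 j ∧ p02 j).card with hA
  set B : ℕ := (Finset.univ.filter fun j => p01 j ∧ ¬ p02 j).card with hB
  set C : ℕ := (Finset.univ.filter fun j => ¬ p01 j ∧ p02 j).card with hC
  set D : ℕ := (Finset.univ.filter fun j => ¬ p01 j ∧ ¬ p02 j).card with hD
  -- card identities
  have e01 : (Finset.univ.filter p01).card = A + B := card_split p01 p02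
  have e02 : (Finset.univ.filter p02).card = A + C := by
    rw [card_split p02 p01, hA, hC]
    congr 1 <;> · congr 1; ext j; simp only [Finset.mem_filter]; tauto
  have e12 : (Finset.univ.filter p12).card = A + D := by
    rw [card_split p12 p01, hA, hD]
    have hiff : ∀ j, (p12 j ∧ p01 j ↔ p01 j ∧ p02 j) ∧ (p12 j ∧ ¬ p01 j ↔ ¬ p01 j ∧ ¬ p02 j) := by
      intro j
      simp only [hp01, hp02, hp12]
      rcases hpm i0 j with h0 | h0 <;> rcases hpm i1 j with h1 | h1 <;>
        rcases hpm i2 j with h2 | h2 <;> rw [h0, h1, h2] <;> norm_num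
    congr 1
    · congr 1; ext j; simp only [Finset.mem_filter]
      exact and_congr_right fun _ => (hiff j).1
    · congr 1; ext j; simp only [Finset.mem_filter]
      exact and_congr_right fun _ => (hiff j).2
  have etot : n = A + B + C + D := by
    have h1 := Finset.card_filter_add_card_filter_not
      (s := (Finset.univ : Finset (Fin n))) p01
    have h2 : (Finset.univ.filter fun j => ¬ p01 j).card = C + D :=
      card_split (fun j => ¬ p01 j) p02
    simp only [Finset.card_univ, Fintype.card_fin] at h1
    omega
  -- ZMod computations
  have k01 := key i0 i1 h01
  have k02 := key i0 i2 h02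
  have k12 := key i1 i2 h12
  rw [e01] at k01
  rw [e02] at k02
  rw [e12] at k12
  rw [h4r] at k01 k02 k12
  push_cast at k01 k02 k12
  have hsumZ : (A : ZMod m) + B + C + D = 4 * r := by
    have : ((n : ℕ) : ZMod m) = ((A + B + C + D : ℕ) : ZMod m) := by rw [← etot]
    rw [h4r] at this
    push_cast at this
    linear_combination -this
  have hu2 : IsUnit (2 : ZMod m) := by
    have h := (ZMod.isUnit_iff_coprime 2 m).mpr h2m
    simpa using h
  have cancel2 : ∀ a b : ZMod m, 2 * a = 2 * b → a = b := fun a b h =>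
    hu2.mul_left_cancel h
  have hA' : (A : ZMod m) = r := by
    refine cancel2 _ _ (cancel2 _ _ ?_)
    linear_combination k01 + k02 + k12 - 2 * hsumZ
  have hB' : (B : ZMod m) = r := cancel2 _ _ (by linear_combination k01 - 2 * hA')
  have hC' : (C : ZMod m) = r := cancel2 _ _ (by linear_combination k02 - 2 * hA')
  have hD' : (D : ZMod m) = r := cancel2 _ _ (by linear_combination k12 - 2 * hA')
  have hge : ∀ k : ℕ, ((k : ZMod m) = (r : ZMod m)) → r ≤ k := by
    intro k hk
    have h : k % m = r % m := (ZMod.natCast_eq_natCast_iff _ _ _).mp hk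
    have h1 := Nat.mod_le k m
    have h2 : r % m = r := Nat.mod_eq_of_lt (by omega)
    omega
  have gA := hge A hA'
  have gB := hge B hB'
  have gC := hge C hC'
  have gD := hge D hD'
  omega
end

section
/- If H is an m-modular Hadamard matrix of order n with gcd(n,m)=1 and n odd, then n is a quadratic residue modulo m, i.e., there exists an integer x with x² ≡ n (mod m). -/
open Matrix

theorem stmt_3 (m n : ℕ) (hgcd : Nat.gcd n m = 1) (hodd : Odd n)
    (H : Matrix (Fin n) (Fin n) ℤ) (hH : IsMHadamard m n H) :
    ∃ x : ℤ, x ^ 2 ≡ (n : ℤ) [ZMOD m] := by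
  obtain ⟨-, h2⟩ := hH
  set f := Int.castRingHom (ZMod m)
  set H' : Matrix (Fin n) (Fin n) (ZMod m) := H.map f with hH'
  have hHH : H' * H'ᵀ = (n : ZMod m) • 1 := by
    ext i j
    have h := h2 i j
    rw [Int.ModEq] at h
    have : (H' * H'ᵀ) i j = (((H * Hᵀ) i j : ℤ) : ZMod m) := by
      simp [hH', Matrix.mul_apply, Matrix.map_apply]
    rw [this, (ZMod.intCast_eq_intCast_iff' _ _ _).2 h]
    by_cases hij : i = j <;> simp [hij, Matrix.one_apply, Matrix.smul_apply]
  have hdet : (H'.det) ^ 2 = (n : ZMod m) ^ n := by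
    have := congrArg Matrix.det hHH
    rw [Matrix.det_mul, Matrix.det_transpose, Matrix.det_smul, Matrix.det_one] at this
    simpa [sq, Fintype.card_fin] using this
  obtain ⟨k, hk⟩ := hodd
  have hu : IsUnit ((n : ZMod m)) := (ZMod.isUnit_iff_coprime n m).2 hgcd
  obtain ⟨u, hu'⟩ := hu
  set x' : ZMod m := H'.det * (↑(u⁻¹ ^ k) : ZMod m)
  have hx : x' ^ 2 = (n : ZMod m) := by
    have h1 : (↑(u ^ k) : ZMod m) * ↑(u⁻¹ ^ k) = 1 := by
      rw [← Units.val_mul, ← mul_pow, mul_inv_cancel, one_pow, Units.val_one]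
    have : x' ^ 2 * (↑(u ^ k) : ZMod m) ^ 2 = (n : ZMod m) * (↑(u ^ k) : ZMod m) ^ 2 := by
      have : x' ^ 2 * (↑(u ^ k) : ZMod m) ^ 2
          = H'.det ^ 2 * ((↑(u ^ k) : ZMod m) * ↑(u⁻¹ ^ k)) ^ 2 := by ring
      rw [this, h1, hdet, Units.val_pow_eq_pow_val, hu', hk]
      ring
    have h2 : IsUnit ((↑(u ^ k) : ZMod m) ^ 2) := (u ^ k).isUnit.pow 2
    exact h2.mul_left_cancel (by rw [mul_comm, this, mul_comm])
  refine ⟨(ZMod.cast x' : ℤ), (ZMod.intCast_eq_intCast_iff' _ _ _).1 ?_⟩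
  push_cast
  exact hx
end

section
/- If H is an m₁-modular Hadamard matrix of order n₁ and K is an m₂-modular Hadamard matrix of order n₂, then the Kronecker product H ⊗ K is an m-modular Hadamard matrix of order n₁n₂, where m = gcd(m₁m₂, m₁n₂, m₂n₁). -/
open Matrix

open Kronecker in
theorem stmt_6 (m₁ m₂ n₁ n₂ : ℕ)
    (H : Matrix (Fin n₁) (Fin n₁) ℤ) (K : Matrix (Fin n₂) (Fin n₂) ℤ)
    (hH : IsMHadamard m₁ n₁ H) (hK : IsMHadamard m₂ n₂ K) :
    IsMHadamard (Nat.gcd (m₁ * m₂) (Nat.gcd (m₁ * n₂) (m₂ * n₁))) (n₁ * n₂)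
      (H ⊗ₖ K) := by
  obtain ⟨hH1, hH2⟩ := hH
  obtain ⟨hK1, hK2⟩ := hK
  constructor
  · intro i j
    rcases hH1 i.1 j.1 with h1 | h1 <;> rcases hK1 i.2 j.2 with h2 | h2 <;>
      simp [Matrix.kroneckerMap_apply, h1, h2]
  · intro i j
    have key : (H ⊗ₖ K) * (H ⊗ₖ K)ᵀ = (H * Hᵀ) ⊗ₖ (K * Kᵀ) := by
      rw [← Matrix.kroneckerMap_transpose, Matrix.mul_kronecker_mul]
    rw [key]
    set g : ℕ := Nat.gcd (m₁ * m₂) (Nat.gcd (m₁ * n₂) (m₂ * n₁)) with hg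
    set a : ℤ := (H * Hᵀ) i.1 j.1 with hadef
    set b : ℤ := (K * Kᵀ) i.2 j.2 with hbdef
    set α : ℤ := if i.1 = j.1 then (n₁ : ℤ) else 0 with hαdef
    set β : ℤ := if i.2 = j.2 then (n₂ : ℤ) else 0 with hβdef
    have ha : (m₁ : ℤ) ∣ α - a := (hH2 i.1 j.1).dvd
    have hb : (m₂ : ℤ) ∣ β - b := (hK2 i.2 j.2).dvd
    have hb' : (m₂ : ℤ) ∣ b - β := (dvd_sub_comm).1 hb
    have hn1 : (n₁ : ℤ) ∣ α := by
      rcases eq_or_ne i.1 j.1 with h | h <;> simp [hαdef, h]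
    have hn2 : (n₂ : ℤ) ∣ β := by
      rcases eq_or_ne i.2 j.2 with h | h <;> simp [hβdef, h]
    have d1 : (g : ℤ) ∣ (m₁ : ℤ) * m₂ := by
      exact_mod_cast Int.natCast_dvd_natCast.2 (Nat.gcd_dvd_left _ _)
    have d2 : (g : ℤ) ∣ (m₁ : ℤ) * n₂ := by
      exact_mod_cast Int.natCast_dvd_natCast.2
        ((Nat.gcd_dvd_right _ _).trans (Nat.gcd_dvd_left _ _))
    have d3 : (g : ℤ) ∣ (m₂ : ℤ) * n₁ := by
      exact_mod_cast Int.natCast_dvd_natCast.2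
        ((Nat.gcd_dvd_right _ _).trans (Nat.gcd_dvd_right _ _))
    have hgoal : (g : ℤ) ∣ α * β - a * b := by
      have e : α * β - a * b = (α - a) * (b - β) + (α - a) * β + α * (β - b) := by ring
      rw [e]
      refine dvd_add (dvd_add ?_ ?_) ?_
      · exact d1.trans (mul_dvd_mul ha hb')
      · exact d2.trans (mul_dvd_mul ha hn2)
      · exact d3.trans (mul_dvd_mul hb (by simpa using hn1) |>.trans (by rw [mul_comm]))
    have hm : a * b ≡ α * β [ZMOD g] := Int.modEq_iff_dvd.2 hgoal
    have : ((H * Hᵀ) ⊗ₖ (K * Kᵀ)) i j = a * b := rfl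
    rw [this]
    have heq : (if i = j then ((n₁ * n₂ : ℕ) : ℤ) else 0) = α * β := by
      rcases eq_or_ne i j with h | h
      · simp [h, hαdef, hβdef, Nat.cast_mul]
      · rw [if_neg h]
        by_cases h1 : i.1 = j.1
        · have h2 : i.2 ≠ j.2 := fun h2 => h (Prod.ext h1 h2)
          simp [hβdef, h2]
        · simp [hαdef, h1]
    rw [heq]
    exact hm
end

section
/- For n ≥ 2, a 3-modular Hadamard matrix of order n exists if and only if n is not congruent to 5 modulo 6. -/
open Matrix

lemma hadamard_reindex {ι κ : Type} [Fintype ι] [DecidableEq ι] [Fintype κ] [DecidableEq κ]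
    (e : ι ≃ κ) {m n : ℕ} {H : Matrix ι ι ℤ} (h : IsMHadamard m n H) :
    IsMHadamard m n (H.submatrix e.symm e.symm) := by
  obtain ⟨h1, h2⟩ := h
  refine ⟨fun i j => h1 _ _, fun i j => ?_⟩
  have key : (H.submatrix e.symm e.symm * (H.submatrix e.symm e.symm)ᵀ) i j
      = (H * Hᵀ) (e.symm i) (e.symm j) := by
    rw [Matrix.transpose_submatrix, Matrix.submatrix_mul_equiv]
    rfl
  rw [key]
  have := h2 (e.symm i) (e.symm j)
  simpa [EmbeddingLike.apply_eq_iff_eq] using this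

open Kronecker in
lemma hadamard_kron {ι κ : Type} [Fintype ι] [DecidableEq ι] [Fintype κ] [DecidableEq κ]
    {m a b : ℕ} {A : Matrix ι ι ℤ} {B : Matrix κ κ ℤ}
    (hA : IsMHadamard m a A) (hB : IsMHadamard m b B) :
    IsMHadamard m (a * b) (A ⊗ₖ B) := by
  obtain ⟨hA1, hA2⟩ := hA
  obtain ⟨hB1, hB2⟩ := hB
  constructor
  · rintro ⟨i, i'⟩ ⟨j, j'⟩
    rcases hA1 i j with h | h <;> rcases hB1 i' j' with h' | h' <;>
      simp [Matrix.kroneckerMap_apply, h, h']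
  · rintro ⟨i, i'⟩ ⟨j, j'⟩
    have hmul : ((A ⊗ₖ B) * (A ⊗ₖ B)ᵀ) (i, i') (j, j')
        = (A * Aᵀ) i j * (B * Bᵀ) i' j' := by
      rw [← Matrix.kroneckerMap_transpose, ← Matrix.mul_kronecker_mul]
      rfl
    rw [hmul]
    have := (hA2 i j).mul (hB2 i' j')
    have heq : (if i = j then (a : ℤ) else 0) * (if i' = j' then (b : ℤ) else 0)
        = (if (i, i') = (j, j') then ((a * b : ℕ) : ℤ) else 0) := by
      by_cases h1 : i = j <;> by_cases h2 : i' = j' <;>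
        simp [h1, h2, Prod.ext_iff]
    rwa [heq] at this

lemma hadamard_J (n : ℕ) (h : n % 3 = 0) :
    IsMHadamard 3 n (Matrix.of fun (_ _ : Fin n) => (1 : ℤ)) := by
  constructor
  · intro i j; left; rfl
  · intro i j
    have : ((Matrix.of fun (_ _ : Fin n) => (1 : ℤ)) *
        (Matrix.of fun (_ _ : Fin n) => (1 : ℤ))ᵀ) i j = (n : ℤ) := by
      simp [Matrix.mul_apply]
    rw [this]
    by_cases hij : i = j
    · simp [hij]
    · simp only [hij, if_neg, if_false]
      show (n : ℤ) % 3 = 0 % 3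
      omega

lemma hadamard_JI (n : ℕ) (h : n % 3 = 1) :
    IsMHadamard 3 n (Matrix.of fun (i j : Fin n) => if i = j then (-1 : ℤ) else 1) := by
  constructor
  · intro i j
    by_cases hij : i = j <;> simp [hij]
  · intro i j
    have hmul : ((Matrix.of fun (i j : Fin n) => if i = j then (-1 : ℤ) else 1) *
        (Matrix.of fun (i j : Fin n) => if i = j then (-1 : ℤ) else 1)ᵀ) i j
        = ∑ k : Fin n, (if i = k then (-1 : ℤ) else 1) * (if j = k then (-1 : ℤ) else 1) := by
      simp [Matrix.mul_apply]
    rw [hmul]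
    by_cases hij : i = j
    · subst hij
      have : ∀ k : Fin n, (if i = k then (-1 : ℤ) else 1) * (if i = k then (-1 : ℤ) else 1)
          = 1 := by intro k; split_ifs <;> norm_num
      rw [Finset.sum_congr rfl fun k _ => this k]
      simp
    · have key : ∀ k : Fin n, (if i = k then (-1 : ℤ) else 1) * (if j = k then (-1 : ℤ) else 1)
          = 1 - (if i = k then (2 : ℤ) else 0) - (if j = k then (2 : ℤ) else 0) := by
        intro k
        by_cases h1 : i = k <;> by_cases h2 : j = k
        · exact absurd (h1.trans h2.symm) hij
        · simp [h1, h2]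
        · simp [h1, h2]
        · simp [h1, h2]
      rw [Finset.sum_congr rfl fun k _ => key k]
      rw [Finset.sum_sub_distrib, Finset.sum_sub_distrib, Finset.sum_const,
        Finset.sum_ite_eq, Finset.sum_ite_eq]
      simp only [Finset.mem_univ, if_true, Finset.card_univ, Fintype.card_fin, nsmul_eq_mul,
        mul_one, hij, if_neg, if_false]
      show ((n : ℤ) - 2 - 2) % 3 = 0 % 3
      omega

lemma hadamard_two : IsMHadamard 3 2 (!![1, 1; 1, -1] : Matrix (Fin 2) (Fin 2) ℤ) := by
  constructor
  · intro i j; fin_cases i <;> fin_cases j <;> simp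
  · decide

theorem stmt_8 (n : ℕ) (hn : 2 ≤ n) :
    (∃ H : Matrix (Fin n) (Fin n) ℤ, IsMHadamard 3 n H) ↔ (n % 6 ≠ 5) := by
  constructor
  · rintro ⟨H, h1, h2⟩ h5
    have hodd : n % 2 = 1 := by omega
    have h32 : n % 3 = 2 := by omega
    set f := Int.castRingHom (ZMod 3)
    set H' : Matrix (Fin n) (Fin n) (ZMod 3) := H.map f with hH'
    have key : H' * H'ᵀ = (-1 : ZMod 3) • 1 := by
      have hmap : H' * H'ᵀ = (H * Hᵀ).map f := by
        rw [Matrix.map_mul, hH', Matrix.transpose_map]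
      ext i j
      have hcast : ((((H * Hᵀ) i j : ℤ)) : ZMod 3)
          = (((if i = j then (n : ℤ) else 0) : ℤ) : ZMod 3) :=
        (ZMod.intCast_eq_intCast_iff _ _ _).mpr (h2 i j)
      have hn3 : ((n : ℕ) : ZMod 3) = -1 := by
        rw [← ZMod.natCast_mod n 3, h32]; decide
      rw [hmap]
      simp only [Matrix.map_apply, Matrix.smul_apply, Matrix.one_apply]
      rw [show (f ((H * Hᵀ) i j) : ZMod 3) = (((H * Hᵀ) i j : ℤ) : ZMod 3) from rfl, hcast]
      by_cases hij : i = j <;> simp [hij, hn3]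
    have hdet : (H'.det) ^ 2 = (-1 : ZMod 3) := by
      have hd : H'.det * H'.det = (H' * H'ᵀ).det := by rw [Matrix.det_mul, Matrix.det_transpose]
      rw [key, Matrix.det_smul, Matrix.det_one, mul_one, Fintype.card_fin] at hd
      rw [sq, hd, Odd.neg_one_pow ⟨n / 2, by omega⟩]
    have : ∀ x : ZMod 3, x ^ 2 ≠ -1 := by decide
    exact this _ hdet
  · intro h5
    rcases (show n % 3 = 0 ∨ n % 3 = 1 ∨ n % 3 = 2 by omega) with h | h | h
    · exact ⟨_, hadamard_J n h⟩
    · exact ⟨_, hadamard_JI n h⟩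
    · have h6 : n % 6 = 2 := by omega
      obtain ⟨m, hm, hm3⟩ : ∃ m, n = 2 * m ∧ m % 3 = 1 := ⟨n / 2, by omega, by omega⟩
      subst hm
      have := hadamard_kron hadamard_two (hadamard_JI m hm3)
      exact ⟨_, hadamard_reindex finProdFinEquiv this⟩
end

section
/- For n ≥ 2, a 4-modular Hadamard matrix of order n exists if and only if n = 2 or n ≡ 0 (mod 4). -/
/-!
For three ±1 vectors `u, v, w` of length `n`, every coordinate of `(u + v) ⬝ᵥ (u + w)` is `0` or
`±4`, so `n + u ⬝ᵥ v + u ⬝ᵥ w + v ⬝ᵥ w ≡ 0 (mod 4)`. Applied to three rows of a 4-modular Hadamard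
matrix, whose pairwise dot products vanish mod 4, this forces `4 ∣ n` once `n ≥ 3`. Conversely,
`!![1, 1; 1, -1]` works for `n = 2`, and for `4 ∣ n` so does `J - 2 • 1`, whose distinct rows have
dot product `n - 4`.
-/

open Matrix

section SignVectors

variable {ι : Type*} [Fintype ι]

lemma dotProduct_self_eq_card_of_sign {u : ι → ℤ} (hu : ∀ k, u k = 1 ∨ u k = -1) :
    u ⬝ᵥ u = Fintype.card ι := by
  have hsq : ∀ k, u k * u k = 1 := fun k => by rcases hu k with h | h <;> simp [h]
  simp [dotProduct, hsq]

lemma four_dvd_card_add_dotProduct {u v w : ι → ℤ} (hu : ∀ k, u k = 1 ∨ u k = -1)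
    (hv : ∀ k, v k = 1 ∨ v k = -1) (hw : ∀ k, w k = 1 ∨ w k = -1) :
    (4 : ℤ) ∣ Fintype.card ι + u ⬝ᵥ v + u ⬝ᵥ w + v ⬝ᵥ w := by
  have hexpand : (u + v) ⬝ᵥ (u + w) = Fintype.card ι + u ⬝ᵥ v + u ⬝ᵥ w + v ⬝ᵥ w := by
    rw [add_dotProduct, dotProduct_add, dotProduct_add, dotProduct_self_eq_card_of_sign hu,
      dotProduct_comm v u]
    ring
  rw [← hexpand]
  refine Finset.dvd_sum fun k _ => ?_
  rcases hu k with hu | hu <;> rcases hv k with hv | hv <;> rcases hw k with hw | hw <;>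
    simp [hu, hv, hw]

end SignVectors

section ModularHadamard

variable {ι : Type} [Fintype ι] [DecidableEq ι]

lemma IsMHadamard.dvd_dotProduct {m n : ℕ} {H : Matrix ι ι ℤ} (hH : IsMHadamard m n H)
    {i j : ι} (hij : i ≠ j) : (m : ℤ) ∣ H i ⬝ᵥ H j := by
  have h := hH.2 i j
  rw [if_neg hij] at h
  exact Int.modEq_zero_iff_dvd.mp h

lemma IsMHadamard.four_dvd_card {n : ℕ} {H : Matrix ι ι ℤ} (hH : IsMHadamard 4 n H)
    (hι : 2 < Fintype.card ι) : 4 ∣ Fintype.card ι := by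
  obtain ⟨a, b, c, hab, hac, hbc⟩ := Fintype.two_lt_card_iff.mp hι
  have hsum := four_dvd_card_add_dotProduct (hH.1 a) (hH.1 b) (hH.1 c)
  have hab := hH.dvd_dotProduct hab
  have hac := hH.dvd_dotProduct hac
  have hbc := hH.dvd_dotProduct hbc
  push_cast at hab hac hbc
  omega

lemma isMHadamard_two (m : ℕ) : IsMHadamard m 2 (!![1, 1; 1, -1] : Matrix (Fin 2) (Fin 2) ℤ) := by
  refine ⟨fun i j => ?_, fun i j => ?_⟩ <;> fin_cases i <;> fin_cases j <;> simp <;> rfl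

lemma isMHadamard_four_one_sub_single (h : 4 ∣ Fintype.card ι) :
    IsMHadamard 4 (Fintype.card ι) (of fun i : ι => (1 : ι → ℤ) - Pi.single i 2) := by
  refine ⟨fun i j => ?_, fun i j => ?_⟩
  · by_cases hij : j = i <;> simp [hij]
  · have hrow : ((1 : ι → ℤ) - Pi.single i 2) ⬝ᵥ (1 - Pi.single j 2)
        = (Fintype.card ι : ℤ) - 4 + 2 * (Pi.single j 2 : ι → ℤ) i := by
      rw [sub_dotProduct, dotProduct_sub, dotProduct_sub, dotProduct_single, single_dotProduct,
        single_dotProduct]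
      simp [dotProduct_one]
      ring
    change ((1 : ι → ℤ) - Pi.single i 2) ⬝ᵥ (1 - Pi.single j 2) ≡ _ [ZMOD 4]
    rw [hrow]
    split_ifs with hij
    · subst hij
      simp [Int.ModEq]
    · rw [Pi.single_eq_of_ne hij, Int.modEq_zero_iff_dvd]
      omega

end ModularHadamard

theorem stmt_9 (n : ℕ) (hn : 2 ≤ n) :
    (∃ H : Matrix (Fin n) (Fin n) ℤ, IsMHadamard 4 n H) ↔ (n = 2 ∨ n % 4 = 0) := by
  constructor
  · rintro ⟨H, hH⟩
    rcases hn.eq_or_lt with rfl | hn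
    · exact Or.inl rfl
    · exact Or.inr (Nat.mod_eq_zero_of_dvd (by simpa using hH.four_dvd_card (by simpa using hn)))
  · rintro (rfl | h4)
    · exact ⟨_, isMHadamard_two 4⟩
    · have hH := isMHadamard_four_one_sub_single (ι := Fin n)
        (by simpa using Nat.dvd_of_mod_eq_zero h4)
      rw [Fintype.card_fin] at hH
      exact ⟨_, hH⟩
end

section
/- For n ≥ 2, a 6-modular Hadamard matrix of order n exists if and only if n is even. -/
/-!
Two distinct rows of a ±1 matrix of order `n` have inner product `≡ n (mod 2)`, while for a
6-modular Hadamard matrix it is `≡ 0 (mod 6)`, so `n` is even. Conversely, for even `n` the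
all-ones matrix `J` works when `6 ∣ n`; `J - 2I`, whose distinct rows have inner product `n - 4`,
works when `n ≡ 4 (mod 6)`; and when `n = 2k` with `k ≡ 1 (mod 3)`, the Kronecker product of the
Sylvester matrix `!![1, 1; 1, -1]` with the 3-modular matrix `J - 2I` of order `k` works.
-/

open Matrix

open scoped Kronecker

theorem dotProduct_modEq_card_of_sign {ι : Type*} [Fintype ι] {u v : ι → ℤ}
    (hu : ∀ k, u k = 1 ∨ u k = -1) (hv : ∀ k, v k = 1 ∨ v k = -1) : u ⬝ᵥ v ≡ Fintype.card ι [ZMOD 2] := by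
  have hterm : ∀ k ∈ Finset.univ, u k * v k ≡ 1 [ZMOD 2] := fun k _ => by
    rcases hu k with h | h <;> rcases hv k with h' | h' <;> simp [h, h'] <;> decide
  simpa [dotProduct] using Int.ModEq.sum hterm

section
variable {ι κ : Type} [Fintype ι] [DecidableEq ι] [Fintype κ] [DecidableEq κ]

theorem IsMHadamard.even_card {m n : ℕ} {H : Matrix ι ι ℤ} (h : IsMHadamard m n H)
    (hm : 2 ∣ m) (hι : 1 < Fintype.card ι) : Even (Fintype.card ι) := by
  obtain ⟨i, j, hij⟩ := Fintype.exists_pair_of_one_lt_card hι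
  have hrows : H i ⬝ᵥ H j ≡ 0 [ZMOD 2] := by
    simpa [hij, mul_apply'] using (h.2 i j).of_dvd (Int.natCast_dvd_natCast.mpr hm)
  rw [even_iff_two_dvd, ← Int.natCast_dvd_natCast, ← Int.modEq_zero_iff_dvd]
  exact (dotProduct_modEq_card_of_sign (h.1 i) (h.1 j)).symm.trans hrows

theorem IsMHadamard.reindex {m n : ℕ} {H : Matrix ι ι ℤ} (h : IsMHadamard m n H) (e : ι ≃ κ) :
    IsMHadamard m n (reindex e e H) := by
  refine ⟨fun i j => h.1 _ _, fun i j => ?_⟩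
  rw [reindex_apply, transpose_submatrix, submatrix_mul_equiv]
  simpa [e.symm.injective.eq_iff] using h.2 (e.symm i) (e.symm j)

theorem IsMHadamard.kronecker {a m n : ℕ} {A : Matrix κ κ ℤ} {H : Matrix ι ι ℤ}
    (hA : ∀ i j, A i j = 1 ∨ A i j = -1) (hAA : A * Aᵀ = (a : ℤ) • 1)
    (h : IsMHadamard m n H) : IsMHadamard (a * m) (a * n) (A ⊗ₖ H) := by
  refine ⟨fun i j => ?_, fun i j => ?_⟩
  · rcases hA i.1 j.1 with h1 | h1 <;> rcases h.1 i.2 j.2 with h2 | h2 <;>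
      simp [kroneckerMap_apply, h1, h2]
  rw [← kroneckerMap_transpose, ← mul_kronecker_mul, hAA, kroneckerMap_apply]
  by_cases hi : i.1 = j.1
  · simpa [hi, Prod.ext_iff, ite_and, apply_ite ((a : ℤ) * ·)] using
      (h.2 i.2 j.2).mul_left' (c := (a : ℤ))
  · simp [hi, Prod.ext_iff]

theorem isMHadamard_ones {m : ℕ} (hm : m ∣ Fintype.card ι) :
    IsMHadamard m (Fintype.card ι) (of fun _ _ : ι => (1 : ℤ)) := by
  refine ⟨fun _ _ => Or.inl rfl, fun i j => ?_⟩
  have hcard : (Fintype.card ι : ℤ) ≡ 0 [ZMOD m] :=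
    Int.modEq_zero_iff_dvd.mpr (Int.natCast_dvd_natCast.mpr hm)
  split_ifs <;> simp [mul_apply, hcard]

theorem sum_ite_neg_one_mul_ite_neg_one (i j : ι) :
    ∑ k, (if i = k then (-1 : ℤ) else 1) * (if j = k then -1 else 1) =
      Fintype.card ι - 4 + if i = j then 4 else 0 := by
  have hterm : ∀ k, (if i = k then (-1 : ℤ) else 1) * (if j = k then -1 else 1) =
      1 - 2 * (if i = k then 1 else 0) - 2 * (if j = k then 1 else 0) +
        4 * (if i = j then (if i = k then 1 else 0) else 0) := by
    intro k
    by_cases hik : i = k <;> by_cases hjk : j = k <;> by_cases hij : i = j <;> simp_all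
  simp only [hterm, Finset.sum_add_distrib, Finset.sum_sub_distrib, ← Finset.mul_sum]
  split_ifs <;> simp <;> ring

theorem isMHadamard_ones_sub_two_one {m : ℕ} (hm : (m : ℤ) ∣ Fintype.card ι - 4) :
    IsMHadamard m (Fintype.card ι) (of fun i j : ι => if i = j then (-1 : ℤ) else 1) := by
  refine ⟨fun i j => by by_cases i = j <;> simp [*], fun i j => ?_⟩
  rw [mul_apply]
  simp only [transpose_apply, of_apply, sum_ite_neg_one_mul_ite_neg_one]
  split_ifs
  · simp
  · simpa using Int.modEq_zero_iff_dvd.mpr hm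

end

theorem sylvester_two_mul_transpose :
    !![(1 : ℤ), 1; 1, -1] * !![(1 : ℤ), 1; 1, -1]ᵀ = ((2 : ℕ) : ℤ) • 1 := by
  ext i j; fin_cases i <;> fin_cases j <;> simp [mul_apply]

theorem exists_isMHadamard_six_of_even {n : ℕ} (hn : Even n) :
    ∃ H : Matrix (Fin n) (Fin n) ℤ, IsMHadamard 6 n H := by
  obtain ⟨k, rfl⟩ := hn
  have hk : k % 3 = 0 ∨ k % 3 = 1 ∨ k % 3 = 2 := by omega
  rcases hk with hk | hk | hk
  · exact ⟨_, by simpa using isMHadamard_ones (ι := Fin (k + k)) (m := 6) (by simp; omega)⟩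
  · have hJ : IsMHadamard 3 k (of fun i j : Fin k => if i = j then (-1 : ℤ) else 1) := by
      simpa using isMHadamard_ones_sub_two_one (ι := Fin k) (m := 3) (by simp; omega)
    have hsylv : ∀ i j, !![(1 : ℤ), 1; 1, -1] i j = 1 ∨ !![(1 : ℤ), 1; 1, -1] i j = -1 := by
      intro i j; fin_cases i <;> fin_cases j <;> simp
    have hH := (hJ.kronecker hsylv sylvester_two_mul_transpose).reindex finProdFinEquiv
    rw [← two_mul]
    exact ⟨_, hH⟩
  · have hJ := isMHadamard_ones_sub_two_one (ι := Fin (k + k)) (m := 6) (by simp; omega)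
    exact ⟨_, by simpa using hJ⟩

theorem stmt_10 (n : ℕ) (hn : 2 ≤ n) :
    (∃ H : Matrix (Fin n) (Fin n) ℤ, IsMHadamard 6 n H) ↔ (Even n) := by
  refine ⟨fun ⟨H, hH⟩ => ?_, exists_isMHadamard_six_of_even⟩
  simpa using hH.even_card (by norm_num) (by simp; omega)
end

section
/- If n ≡ 3 (mod 10) or n ≡ 7 (mod 10), then no 5-modular Hadamard matrix of order n exists. -/
open Matrix

lemma zmod5_ne : (2 : ZMod 5) ≠ 0 ∧ (3 : ZMod 5) ≠ 0 := by decide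

lemma zmod5_nonsq : ∀ x : ZMod 5, x ^ 2 ≠ 2 ∧ x ^ 2 ≠ 3 := by decide

theorem stmt_11 (n : ℕ) (h : n % 10 = 3 ∨ n % 10 = 7) :
    ¬ ∃ H : Matrix (Fin n) (Fin n) ℤ, IsMHadamard 5 n H := by
  rintro ⟨H, _, hc⟩
  set f : ℤ →+* ZMod 5 := Int.castRingHom (ZMod 5) with hf
  set M : Matrix (Fin n) (Fin n) (ZMod 5) := H.map f with hM
  have key : M * Mᵀ = (n : ZMod 5) • 1 := by
    ext i j
    have h1 := (ZMod.intCast_eq_intCast_iff _ _ _).mpr (hc i j)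
    have h2 : (M * Mᵀ) i j = (((H * Hᵀ) i j : ℤ) : ZMod 5) := by
      simp [hM, Matrix.mul_apply, Matrix.transpose_apply]
    rw [h2, h1]
    by_cases hij : i = j <;> simp [hij, Matrix.one_apply]
  have hdet : M.det ^ 2 = (n : ZMod 5) ^ n := by
    have := congrArg Matrix.det key
    rwa [Matrix.det_mul, Matrix.det_transpose, Matrix.det_smul, Matrix.det_one,
      mul_one, Fintype.card_fin, ← sq] at this
  have hn5 : (n : ZMod 5) = 2 ∨ (n : ZMod 5) = 3 := by
    have : ((n % 5 : ℕ) : ZMod 5) = (n : ZMod 5) := ZMod.natCast_mod n 5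
    rcases h with h | h
    · right; rw [← this]; have : n % 5 = 3 := by omega
      rw [this]; rfl
    · left; rw [← this]; have : n % 5 = 2 := by omega
      rw [this]; rfl
  haveI : Fact (Nat.Prime 5) := ⟨by norm_num⟩
  have hodd : n % 2 = 1 := by omega
  obtain ⟨k, hk⟩ : ∃ k, n = 2 * k + 1 := ⟨n / 2, by omega⟩
  have hpow : (n : ZMod 5) ^ n = ((n : ZMod 5) ^ k) ^ 2 * (n : ZMod 5) := by
    rw [hk, ← pow_mul, mul_comm k 2, pow_succ]
  have hne : (n : ZMod 5) ^ k ≠ 0 := by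
    apply pow_ne_zero
    rcases hn5 with h | h <;> rw [h] <;> [exact zmod5_ne.1; exact zmod5_ne.2]
  have hsq : ∃ x : ZMod 5, x ^ 2 = (n : ZMod 5) := by
    refine ⟨M.det * ((n : ZMod 5) ^ k)⁻¹, ?_⟩
    rw [mul_pow, hdet, hpow]
    field_simp
  obtain ⟨x, hx⟩ := hsq
  rcases hn5 with h | h <;> rw [h] at hx <;> [exact (zmod5_nonsq x).1 hx; exact (zmod5_nonsq x).2 hx]
end

section
/- If n ≡ 0, 4, 5, 8, or 9 (mod 10), then there exists a 5-modular Hadamard matrix of order n. -/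
open Matrix

/-- Inner products of rows of `J - 2I`. -/
lemma sum_JmI (m : ℕ) (p q : Fin m) :
    (∑ k, (if p = k then (-1:ℤ) else 1) * (if q = k then (-1:ℤ) else 1)) =
      if p = q then (m:ℤ) else (m:ℤ) - 4 := by
  rcases eq_or_ne p q with h | h
  · subst h
    rw [if_pos rfl]
    have h1 : ∀ k ∈ Finset.univ, (if p = k then (-1:ℤ) else 1) * (if p = k then (-1:ℤ) else 1) = 1 := by
      intro k _; split_ifs <;> ring
    rw [Finset.sum_congr rfl h1]
    simp
  · rw [if_neg h]
    have h1 : ∀ k ∈ Finset.univ, (if p = k then (-1:ℤ) else 1) * (if q = k then (-1:ℤ) else 1)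
        = 1 - (if p = k then (2:ℤ) else 0) - (if q = k then (2:ℤ) else 0) := by
      intro k _
      split_ifs with h₁ h₂
      · exact absurd (h₁.trans h₂.symm) h
      · ring
      · ring
      · ring
    rw [Finset.sum_congr rfl h1]
    rw [Finset.sum_sub_distrib, Finset.sum_sub_distrib, Finset.sum_ite_eq,
      Finset.sum_ite_eq]
    simp
    ring

lemma transport {ι : Type} [Fintype ι] [DecidableEq ι] {n : ℕ}
    (e : Fin n ≃ ι) {H : Matrix ι ι ℤ} (h : IsMHadamard 5 n H) :
    IsMHadamard 5 n (H.submatrix e e) := by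
  obtain ⟨h1, h2⟩ := h
  refine ⟨fun i j => h1 _ _, fun i j => ?_⟩
  have key : (H.submatrix e e * (H.submatrix e e)ᵀ) i j = (H * Hᵀ) (e i) (e j) := by
    rw [Matrix.transpose_submatrix, Matrix.submatrix_mul_equiv]
    rfl
  rw [key]
  have h3 := h2 (e i) (e j)
  simpa [Equiv.apply_eq_iff_eq] using h3

theorem stmt_12 (n : ℕ)
    (h : n % 10 = 0 ∨ n % 10 = 4 ∨ n % 10 = 5 ∨ n % 10 = 8 ∨ n % 10 = 9) :
    ∃ H : Matrix (Fin n) (Fin n) ℤ, IsMHadamard 5 n H := by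
  have h5 : n % 5 = 0 ∨ n % 5 = 4 ∨ n % 10 = 8 := by omega
  rcases h5 with h0 | h4 | h8
  · -- all-ones matrix
    refine ⟨Matrix.of fun _ _ => 1, fun i j => Or.inl rfl, fun i j => ?_⟩
    have key : ((Matrix.of fun _ _ => (1:ℤ) : Matrix (Fin n) (Fin n) ℤ) *
        (Matrix.of fun _ _ => (1:ℤ) : Matrix (Fin n) (Fin n) ℤ)ᵀ) i j = (n : ℤ) := by
      simp [Matrix.mul_apply]
    rw [key]
    rcases eq_or_ne i j with hij | hij
    · simp [hij]
    · rw [if_neg hij]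
      exact Int.modEq_zero_iff_dvd.mpr (by omega)
  · -- J - 2I
    refine ⟨Matrix.of fun i j => if i = j then -1 else 1, fun i j => ?_, fun i j => ?_⟩
    · simp only [Matrix.of_apply]; split_ifs <;> simp
    · have key : ((Matrix.of fun i j => if i = j then (-1:ℤ) else 1 : Matrix (Fin n) (Fin n) ℤ) *
          (Matrix.of fun i j => if i = j then (-1:ℤ) else 1 : Matrix (Fin n) (Fin n) ℤ)ᵀ) i j
          = if i = j then (n:ℤ) else (n:ℤ) - 4 := by
        rw [Matrix.mul_apply]
        simpa using sum_JmI n i j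
      rw [key]
      rcases eq_or_ne i j with hij | hij
      · simp [hij]
      · rw [if_neg hij, if_neg hij]
        exact Int.modEq_zero_iff_dvd.mpr (by omega)
  · -- n = 2m with m ≡ 4 mod 5 : Kronecker of (J-2I) with H2
    obtain ⟨m, hm, hm5⟩ : ∃ m, n = 2 * m ∧ m % 5 = 4 := ⟨n / 2, by omega, by omega⟩
    set H' : Matrix (Fin m × Fin 2) (Fin m × Fin 2) ℤ :=
      Matrix.of fun x y => (if x.1 = y.1 then (-1:ℤ) else 1) *
        (if x.2 = 1 ∧ y.2 = 1 then (-1:ℤ) else 1) with hH'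
    have hsum2 : ∀ a b : Fin 2,
        (∑ c : Fin 2, (if a = 1 ∧ c = 1 then (-1:ℤ) else 1) *
          (if b = 1 ∧ c = 1 then (-1:ℤ) else 1)) = if a = b then 2 else 0 := by
      decide
    have hHad : IsMHadamard 5 n H' := by
      constructor
      · intro x y
        simp only [hH', Matrix.of_apply]
        split_ifs <;> norm_num
      · intro x y
        have key : (H' * H'ᵀ) x y =
            (if x.1 = y.1 then (m:ℤ) else (m:ℤ) - 4) * (if x.2 = y.2 then 2 else 0) := by
          rw [Matrix.mul_apply]
          simp only [Matrix.transpose_apply, hH', Matrix.of_apply]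
          rw [Fintype.sum_prod_type]
          have step : ∀ p : Fin m, ∀ a : Fin 2,
              ((if x.1 = p then (-1:ℤ) else 1) * (if x.2 = 1 ∧ a = 1 then (-1:ℤ) else 1)) *
              ((if y.1 = p then (-1:ℤ) else 1) * (if y.2 = 1 ∧ a = 1 then (-1:ℤ) else 1)) =
              ((if x.1 = p then (-1:ℤ) else 1) * (if y.1 = p then (-1:ℤ) else 1)) *
              ((if x.2 = 1 ∧ a = 1 then (-1:ℤ) else 1) * (if y.2 = 1 ∧ a = 1 then (-1:ℤ) else 1)) := by
            intro p a; ring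
          calc (∑ p : Fin m, ∑ a : Fin 2,
              ((if x.1 = p then (-1:ℤ) else 1) * (if x.2 = 1 ∧ a = 1 then (-1:ℤ) else 1)) *
              ((if y.1 = p then (-1:ℤ) else 1) * (if y.2 = 1 ∧ a = 1 then (-1:ℤ) else 1)))
              = ∑ p : Fin m, ∑ a : Fin 2,
                ((if x.1 = p then (-1:ℤ) else 1) * (if y.1 = p then (-1:ℤ) else 1)) *
                ((if x.2 = 1 ∧ a = 1 then (-1:ℤ) else 1) * (if y.2 = 1 ∧ a = 1 then (-1:ℤ) else 1)) := by
                exact Finset.sum_congr rfl fun p _ => Finset.sum_congr rfl fun a _ => step p a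
            _ = (∑ p : Fin m, (if x.1 = p then (-1:ℤ) else 1) * (if y.1 = p then (-1:ℤ) else 1)) *
                (∑ a : Fin 2, (if x.2 = 1 ∧ a = 1 then (-1:ℤ) else 1) * (if y.2 = 1 ∧ a = 1 then (-1:ℤ) else 1)) := by
                rw [Finset.sum_mul_sum]
            _ = _ := by rw [sum_JmI m x.1 y.1, hsum2 x.2 y.2]
        rw [key]
        rcases eq_or_ne x y with hxy | hxy
        · subst hxy
          rw [if_pos rfl, if_pos rfl, if_pos rfl]
          have hmn : (m:ℤ) * 2 = (n:ℤ) := by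
            have : m * 2 = n := by omega
            exact_mod_cast this
          rw [hmn]
        · rw [if_neg hxy]
          rcases eq_or_ne x.2 y.2 with h2 | h2
          · have h1 : x.1 ≠ y.1 := fun h1 => hxy (Prod.ext h1 h2)
            rw [if_neg h1, if_pos h2]
            have : ((m:ℤ) - 4) * 2 = 2 * (m:ℤ) - 8 := by ring
            rw [this]
            exact Int.modEq_zero_iff_dvd.mpr (by omega)
          · rw [if_neg h2, mul_zero]
    have hcard : Fintype.card (Fin m × Fin 2) = n := by
      simp only [Fintype.card_prod, Fintype.card_fin]; omega
    exact ⟨_, transport (Fintype.equivFinOfCardEq hcard).symm hHad⟩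
end

section
/- There is no 5-modular Hadamard matrix of order 6. -/
open Matrix

theorem stmt_13 : ¬ ∃ H : Matrix (Fin 6) (Fin 6) ℤ, IsMHadamard 5 6 H := by
  rintro ⟨H, hpm, hmod⟩
  -- Step 1: distinct rows have zero dot product over ℤ
  have hdot : ∀ i j : Fin 6, i ≠ j → ∑ k, H i k * H j k = 0 := by
    intro i j hij
    set d := ∑ k, H i k * H j k with hd
    have h5 : (5 : ℤ) ∣ d := by
      have h := hmod i j
      rw [if_neg hij] at h
      have hmul : (H * Hᵀ) i j = d := by
        simp [Matrix.mul_apply, Matrix.transpose_apply, hd]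
      rw [hmul] at h
      exact Int.modEq_zero_iff_dvd.mp h
    have h2 : (2 : ℤ) ∣ d := by
      have hm : d % 2 = (∑ k : Fin 6, (H i k * H j k) % 2) % 2 :=
        Finset.sum_int_mod _ _ _
      have he : ∀ k : Fin 6, (H i k * H j k) % 2 = 1 := fun k => by
        rcases hpm i k with h1 | h1 <;> rcases hpm j k with h2 | h2 <;>
          simp [h1, h2]
      rw [Finset.sum_congr rfl (fun k _ => he k)] at hm
      simp at hm
      omega
    have hub : d ≤ 6 := by
      calc d ≤ ∑ _k : Fin 6, (1 : ℤ) :=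
            Finset.sum_le_sum (fun k _ => by
              rcases hpm i k with h1 | h1 <;> rcases hpm j k with h2 | h2 <;>
                simp [h1, h2])
        _ = 6 := by simp
    have hlb : (-6 : ℤ) ≤ d := by
      calc (-6 : ℤ) = ∑ _k : Fin 6, (-1 : ℤ) := by simp
        _ ≤ d := Finset.sum_le_sum (fun k _ => by
              rcases hpm i k with h1 | h1 <;> rcases hpm j k with h2 | h2 <;>
                simp [h1, h2])
    omega
  -- Step 2: three-row counting argument
  set a : Fin 6 → ℤ := fun k => H 0 k * H 1 k with ha_def
  set b : Fin 6 → ℤ := fun k => H 0 k * H 2 k with hb_def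
  have hapm : ∀ k, a k = 1 ∨ a k = -1 := fun k => by
    rcases hpm 0 k with h1 | h1 <;> rcases hpm 1 k with h2 | h2 <;>
      simp [ha_def, h1, h2]
  have hbpm : ∀ k, b k = 1 ∨ b k = -1 := fun k => by
    rcases hpm 0 k with h1 | h1 <;> rcases hpm 2 k with h2 | h2 <;>
      simp [hb_def, h1, h2]
  have ha : ∑ k, a k = 0 := hdot 0 1 (by decide)
  have hb : ∑ k, b k = 0 := hdot 0 2 (by decide)
  have hab : ∑ k, a k * b k = 0 := by
    have : ∀ k, a k * b k = H 1 k * H 2 k := fun k => by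
      rcases hpm 0 k with h1 | h1 <;> simp [ha_def, hb_def, h1]
    rw [Finset.sum_congr rfl (fun k _ => this k)]
    exact hdot 1 2 (by decide)
  set t : Fin 6 → ℤ := fun k => (1 + a k) * (1 + b k) * (1 + a k * b k) with ht_def
  have h8 : ∀ k, (8 : ℤ) ∣ t k := fun k => by
    rcases hapm k with h1 | h1 <;> rcases hbpm k with h2 | h2 <;>
      simp [ht_def, h1, h2]
  have hexp : ∀ k, t k = 2 + 2 * a k + 2 * b k + 2 * (a k * b k) := fun k => by
    rcases hapm k with h1 | h1 <;> rcases hbpm k with h2 | h2 <;>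
      simp [ht_def, h1, h2]
  have hsum : ∑ k, t k = 12 := by
    rw [Finset.sum_congr rfl (fun k _ => hexp k)]
    rw [Finset.sum_add_distrib, Finset.sum_add_distrib, Finset.sum_add_distrib,
      ← Finset.mul_sum, ← Finset.mul_sum, ← Finset.mul_sum, ha, hb, hab]
    simp
  have : (8 : ℤ) ∣ 12 := hsum ▸ Finset.dvd_sum (fun k _ => h8 k)
  norm_num at this
end

section
/- There is no 5-modular Hadamard matrix of order 11. -/
open Matrix

lemma aux_nonneg (u v w : Fin 11 → ℤ) (hu : ∀ k, u k = 1 ∨ u k = -1)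
    (hv : ∀ k, v k = 1 ∨ v k = -1) (hw : ∀ k, w k = 1 ∨ w k = -1)
    (e1 e2 : ℤ) (he1 : e1 = 1 ∨ e1 = -1) (he2 : e2 = 1 ∨ e2 = -1) :
    0 ≤ 11 - e1 * (∑ k, u k * v k) - e2 * (∑ k, u k * w k)
      + e1 * e2 * (∑ k, v k * w k) := by
  have key : ∀ k : Fin 11,
      0 ≤ 1 - e1 * (u k * v k) - e2 * (u k * w k) + e1 * e2 * (v k * w k) := by
    intro k
    rcases hu k with h | h <;> rcases hv k with h' | h' <;> rcases hw k with h'' | h'' <;>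
      rcases he1 with e | e <;> rcases he2 with e' | e' <;>
      simp [h, h', h'', e, e']
  have hsum : 0 ≤ ∑ k : Fin 11,
      (1 - e1 * (u k * v k) - e2 * (u k * w k) + e1 * e2 * (v k * w k)) :=
    Finset.sum_nonneg fun k _ => key k
  calc (0:ℤ) ≤ _ := hsum
    _ = 11 - e1 * (∑ k, u k * v k) - e2 * (∑ k, u k * w k)
        + e1 * e2 * (∑ k, v k * w k) := by
      simp [Finset.sum_add_distrib, Finset.sum_sub_distrib, ← Finset.mul_sum]

theorem stmt_14 : ¬ ∃ H : Matrix (Fin 11) (Fin 11) ℤ, IsMHadamard 5 11 H := by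
  rintro ⟨H, hpm, horth⟩
  -- dot products of rows
  have hdot : ∀ i j, (H * Hᵀ) i j = ∑ k, H i k * H j k := by
    intro i j; simp [Matrix.mul_apply]
  set p := ∑ k, H 0 k * H 1 k with hp
  set q := ∑ k, H 0 k * H 2 k with hq
  set r := ∑ k, H 1 k * H 2 k with hr
  -- each off-diagonal dot product is divisible by 5
  have hdvd : ∀ i j : Fin 11, i ≠ j → (5:ℤ) ∣ ∑ k, H i k * H j k := by
    intro i j hij
    have := horth i j
    rw [if_neg hij, hdot] at this
    exact Int.dvd_of_emod_eq_zero (by simpa [Int.ModEq] using this)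
  -- each dot product is odd
  have hodd : ∀ i j : Fin 11, (∑ k, H i k * H j k) % 2 = 1 := by
    intro i j
    have hc : ((∑ k, H i k * H j k : ℤ) : ZMod 2) = 1 := by
      push_cast
      calc ∑ k : Fin 11, ((H i k : ZMod 2) * (H j k : ZMod 2))
          = ∑ _k : Fin 11, (1 : ZMod 2) := Finset.sum_congr rfl (fun k _ => by
            rcases hpm i k with h | h <;> rcases hpm j k with h' | h' <;>
              rw [h, h'] <;> decide)
        _ = 1 := by decide
    have hd : (2:ℤ) ∣ (∑ k, H i k * H j k) - 1 := by
      have : (((∑ k, H i k * H j k) - 1 : ℤ) : ZMod 2) = 0 := by push_cast [hc]; ring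
      exact_mod_cast (ZMod.intCast_zmod_eq_zero_iff_dvd _ 2).mp this
    omega
  -- each dot product is at most 11 in absolute value
  have habs : ∀ i j : Fin 11, |∑ k, H i k * H j k| ≤ 11 := by
    intro i j
    calc |∑ k, H i k * H j k| ≤ ∑ k, |H i k * H j k| := Finset.abs_sum_le_sum_abs _ _
      _ = ∑ k : Fin 11, 1 := Finset.sum_congr rfl (fun k _ => by
          rcases hpm i k with h | h <;> rcases hpm j k with h' | h' <;> simp [h, h'])
      _ = 11 := by simp
  -- hence each is ±5
  have hpm5 : ∀ i j : Fin 11, i ≠ j →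
      (∑ k, H i k * H j k) = 5 ∨ (∑ k, H i k * H j k) = -5 := by
    intro i j hij
    obtain ⟨c, hc⟩ := hdvd i j hij
    have h1 := hodd i j
    have h2 := abs_le.mp (habs i j)
    omega
  have hp5 := hpm5 0 1 (by decide)
  have hq5 := hpm5 0 2 (by decide)
  have hr5 := hpm5 1 2 (by decide)
  -- p + q + r ≡ 1 (mod 4)
  have hm4 : (p + q + r) % 4 = 1 := by
    have hc : ((p + q + r : ℤ) : ZMod 4) = 1 := by
      rw [hp, hq, hr]
      push_cast
      rw [← Finset.sum_add_distrib, ← Finset.sum_add_distrib]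
      calc ∑ k : Fin 11, ((H 0 k : ZMod 4) * (H 1 k : ZMod 4)
              + (H 0 k : ZMod 4) * (H 2 k : ZMod 4)
              + (H 1 k : ZMod 4) * (H 2 k : ZMod 4))
          = ∑ _k : Fin 11, (3 : ZMod 4) := Finset.sum_congr rfl (fun k _ => by
            rcases hpm 0 k with h | h <;> rcases hpm 1 k with h' | h' <;>
              rcases hpm 2 k with h'' | h'' <;> rw [h, h', h''] <;> decide)
        _ = 1 := by decide
    have hd : (4:ℤ) ∣ (p + q + r) - 1 := by
      have : (((p + q + r) - 1 : ℤ) : ZMod 4) = 0 := by push_cast [hc]; ring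
      exact_mod_cast (ZMod.intCast_zmod_eq_zero_iff_dvd _ 4).mp this
    omega
  -- the four nonnegativity constraints
  have I1 := aux_nonneg (H 0) (H 1) (H 2) (hpm 0) (hpm 1) (hpm 2) 1 1 (Or.inl rfl) (Or.inl rfl)
  have I2 := aux_nonneg (H 0) (H 1) (H 2) (hpm 0) (hpm 1) (hpm 2) 1 (-1) (Or.inl rfl) (Or.inr rfl)
  have I3 := aux_nonneg (H 0) (H 1) (H 2) (hpm 0) (hpm 1) (hpm 2) (-1) 1 (Or.inr rfl) (Or.inl rfl)
  have I4 := aux_nonneg (H 0) (H 1) (H 2) (hpm 0) (hpm 1) (hpm 2) (-1) (-1) (Or.inr rfl) (Or.inr rfl)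
  rw [← hp, ← hq, ← hr] at I1 I2 I3 I4
  rcases hp5 with h1 | h1 <;> rcases hq5 with h2 | h2 <;> rcases hr5 with h3 | h3 <;>
    rw [← hp] at h1 <;> rw [← hq] at h2 <;> rw [← hr] at h3 <;> omega
end

section
/- Let m, n ≥ 3 with gcd(m,n)=1, and let H be a normalized m-modular Hadamard matrix of order n (first row and first column all 1). Let C be the core of H (the (n−1)×(n−1) matrix obtained by deleting the first row and column), and set D = (C + J)/2. Then D is an (n−1, 2^(φ(m)−1)(n−2), 2^(φ(m)−2)(n−4); m) modular symmetric design. -/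
open Matrix

/-- `D` is an `m`-modular symmetric design with parameters `(v, k, λ; m)`
(`v` being the size of the index type): a 0-1 matrix whose row and column sums
are `≡ k (mod m)` and with `D * Dᵀ ≡ (k - λ) • I + λ • J (mod m)`. -/
def IsMDesign (m : ℕ) (k lam : ℤ) {ι : Type} [Fintype ι] [DecidableEq ι]
    (D : Matrix ι ι ℤ) : Prop :=
  (∀ i j, D i j = 0 ∨ D i j = 1) ∧
  (∀ i, (∑ j, D i j) ≡ k [ZMOD m]) ∧
  (∀ j, (∑ i, D i j) ≡ k [ZMOD m]) ∧
  ∀ i j, (D * Dᵀ) i j ≡ ((k - lam) * (if i = j then 1 else 0) + lam) [ZMOD m]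

/-- The core `C` of a normalized `MH(n+1, m)` matrix `H` yields, via `D = (C + J)/2`,
an `(n, 2^(φ(m)-1)(n-1), 2^(φ(m)-2)(n-3); m)` modular symmetric design
(the order of `H` is `n + 1`, so these parameters are
`(n+1-1, 2^(φ(m)-1)((n+1)-2), 2^(φ(m)-2)((n+1)-4); m)`). -/
theorem stmt_15 (m n : ℕ) (hm : 3 ≤ m) (hn : 2 ≤ n)
    (hgcd : Nat.gcd m (n + 1) = 1)
    (H : Matrix (Fin (n + 1)) (Fin (n + 1)) ℤ) (hH : IsMHadamard m (n + 1) H)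
    (hrow : ∀ j, H 0 j = 1) (hcol : ∀ i, H i 0 = 1) :
    IsMDesign m (2 ^ (Nat.totient m - 1) * ((n : ℤ) - 1))
      (2 ^ (Nat.totient m - 2) * ((n : ℤ) - 3))
      (Matrix.of fun i j : Fin n => (H i.succ j.succ + 1) / 2) := by
  obtain ⟨hpm, hHH⟩ := hH
  have hm0 : 0 < m := by omega
  set t := Nat.totient m with ht
  -- row sums of H (other than the first) vanish mod m
  have hRS : ∀ i : Fin (n+1), i ≠ 0 → (∑ l, ((H i l : ℤ) : ZMod m)) = 0 := by
    intro i hi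
    have h := hHH i 0
    rw [if_neg hi, ← ZMod.intCast_eq_intCast_iff] at h
    have h2 : ((∑ l, H i l * H 0 l : ℤ) : ZMod m) = 0 := by
      simpa [Matrix.mul_apply] using h
    rw [Int.cast_sum] at h2
    simpa [hrow] using h2
  -- m is odd
  have hm2 : ¬ (2 ∣ m) := by
    intro h2
    set i0 : Fin (n+1) := (⟨0, by omega⟩ : Fin n).succ with hi0
    have hne : i0 ≠ 0 := Fin.succ_ne_zero _
    have h := hHH i0 0
    rw [if_neg hne] at h
    have hdvd : (m:ℤ) ∣ (H * Hᵀ) i0 0 := Int.modEq_zero_iff_dvd.mp h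
    have hS : (H*Hᵀ) i0 0 = ∑ l, H i0 l := by
      simp [Matrix.mul_apply, hrow]
    have hpar : (2:ℤ) ∣ ((∑ l, H i0 l) - (n+1)) := by
      have he : (∑ l, H i0 l) - (n+1)
          = ∑ l, (H i0 l - 1) := by
        rw [Finset.sum_sub_distrib]
        simp [Finset.card_univ]
      rw [he]
      apply Finset.dvd_sum
      intro l _
      rcases hpm i0 l with h'|h' <;> rw [h'] <;> norm_num
    have h2m : (2:ℤ) ∣ (m:ℤ) := by exact_mod_cast h2
    have hds : (2:ℤ) ∣ (∑ l, H i0 l) := h2m.trans (hS ▸ hdvd)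
    have hnp : (2:ℤ) ∣ ((n:ℤ)+1) := by
      have := dvd_sub hds hpar
      simpa using this
    have hnp' : 2 ∣ (n+1) := by exact_mod_cast hnp
    have := Nat.dvd_gcd h2 hnp'
    omega
  have hcop2 : Nat.Coprime 2 m := (Nat.Prime.coprime_iff_not_dvd Nat.prime_two).mpr hm2
  -- Euler
  have heuler : (2 : ZMod m) ^ t = 1 := by
    have h := Nat.ModEq.pow_totient hcop2
    have := (ZMod.natCast_eq_natCast_iff _ _ _).mpr h
    push_cast at this
    exact this
  have hφ : 2 ≤ t := by
    have h0 : 0 < t := Nat.totient_pos.mpr hm0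
    have h1 : t ≠ 1 := by
      intro h
      rcases Nat.totient_eq_one_iff.mp h with rfl|rfl <;> omega
    omega
  have hu2 : IsUnit (2 : ZMod m) := by
    have := (ZMod.isUnit_iff_coprime 2 m).mpr hcop2
    simpa using this
  have hu4 : IsUnit (4 : ZMod m) := by
    have := hu2.mul hu2
    have h4 : (4:ZMod m) = 2 * 2 := by norm_num
    rwa [← h4] at this
  have h2φ1 : (2:ZMod m) ^ (t - 1) * 2 = 1 := by
    rw [← pow_succ, Nat.sub_add_cancel (by omega)]
    exact heuler
  have h4φ2 : (2:ZMod m) ^ (t - 2) * 4 = 1 := by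
    have h4 : (4:ZMod m) = 2 * 2 := by norm_num
    rw [h4, ← mul_assoc, ← pow_succ, ← pow_succ,
      show t - 2 + 1 + 1 = t by omega]
    exact heuler
  -- cast of the Hadamard relation
  have hmap : ∀ i j, ((H * Hᵀ) i j : ZMod m)
      = if i = j then (n:ZMod m)+1 else 0 := by
    intro i j
    have h := (ZMod.intCast_eq_intCast_iff _ _ _).mpr (hHH i j)
    rcases eq_or_ne i j with rfl|hne
    · rw [if_pos rfl] at h ⊢
      rw [h]; push_cast; ring
    · rw [if_neg hne] at h ⊢
      rw [h]; push_cast; ring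
  -- column sums vanish mod m, via invertibility of H mod m
  have hCS : ∀ j : Fin (n+1), j ≠ 0 → (∑ l, ((H l j : ℤ) : ZMod m)) = 0 := by
    set c : ZMod m := (n:ZMod m) + 1 with hc
    have hcu : IsUnit c := by
      have := (ZMod.isUnit_iff_coprime (n+1) m).mpr (Nat.coprime_comm.mp hgcd)
      have he : ((n+1 : ℕ) : ZMod m) = c := by push_cast; rfl
      rwa [he] at this
    set Hm : Matrix (Fin (n+1)) (Fin (n+1)) (ZMod m) :=
      H.map (Int.cast : ℤ → ZMod m) with hHm
    have hHmul : Hm * Hmᵀ = c • 1 := by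
      ext i j
      have h1 : (Hm * Hmᵀ) i j = ((H * Hᵀ) i j : ZMod m) := by
        rw [Matrix.mul_apply, Matrix.mul_apply, Int.cast_sum]
        simp [hHm, Matrix.map_apply]
      rw [h1, hmap i j]
      rw [Matrix.smul_apply, Matrix.one_apply]
      split_ifs <;> simp [smul_eq_mul, hc]
    have h1 : Hm * (c⁻¹ • Hmᵀ) = 1 := by
      rw [Matrix.mul_smul, hHmul, smul_smul, ZMod.inv_mul_of_unit _ hcu, one_smul]
    have h2 : (c⁻¹ • Hmᵀ) * Hm = 1 := mul_eq_one_comm.mp h1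
    rw [Matrix.smul_mul] at h2
    have hT : Hmᵀ * Hm = c • 1 := by
      calc Hmᵀ * Hm = c • (c⁻¹ • (Hmᵀ * Hm)) := by
            rw [smul_smul, ZMod.mul_inv_of_unit _ hcu, one_smul]
        _ = c • 1 := by rw [h2]
    intro j hj
    have h3 := congrFun (congrFun hT 0) j
    rw [Matrix.mul_apply] at h3
    simp only [Matrix.transpose_apply] at h3
    have h4 : ∀ l, Hm l 0 * Hm l j = ((H l j : ℤ) : ZMod m) := by
      intro l
      simp [hHm, Matrix.map_apply, hcol]
    rw [Finset.sum_congr rfl (fun l _ => h4 l)] at h3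
    rw [h3]
    simp [Matrix.smul_apply, Matrix.one_apply, (Ne.symm hj)]
  -- core row/column sums
  have hrowC : ∀ i : Fin n, (∑ j : Fin n, ((H i.succ j.succ : ℤ) : ZMod m)) = -1 := by
    intro i
    have h := hRS i.succ (Fin.succ_ne_zero i)
    rw [Fin.sum_univ_succ] at h
    rw [hcol i.succ] at h
    push_cast at h
    linear_combination h
  have hcolC : ∀ j : Fin n, (∑ i : Fin n, ((H i.succ j.succ : ℤ) : ZMod m)) = -1 := by
    intro j
    have h := hCS j.succ (Fin.succ_ne_zero j)
    rw [Fin.sum_univ_succ] at h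
    rw [hrow j.succ] at h
    push_cast at h
    linear_combination h
  -- doubling identity for the entries of D
  have hD2 : ∀ i j : Fin n, (2:ℤ) * ((H i.succ j.succ + 1)/2) = H i.succ j.succ + 1 := by
    intro i j
    rcases hpm i.succ j.succ with h|h <;> rw [h] <;> norm_num
  refine ⟨?_, ?_, ?_, ?_⟩
  · -- 0-1 entries
    intro i j
    simp only [Matrix.of_apply]
    rcases hpm i.succ j.succ with h|h <;> rw [h]
    · right; norm_num
    · left; norm_num
  · -- row sums
    intro i
    rw [← ZMod.intCast_eq_intCast_iff]
    simp only [Matrix.of_apply]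
    refine hu2.mul_right_cancel ?_
    have e0 : (∑ j : Fin n, (H i.succ j.succ + 1)/2 : ℤ) * 2
        = (∑ j : Fin n, H i.succ j.succ) + n := by
      calc (∑ j : Fin n, (H i.succ j.succ + 1)/2 : ℤ) * 2
          = ∑ j : Fin n, (H i.succ j.succ + 1) := by
            rw [Finset.sum_mul]
            exact Finset.sum_congr rfl fun j _ => by rw [mul_comm]; exact hD2 i j
        _ = (∑ j : Fin n, H i.succ j.succ) + n := by
            rw [Finset.sum_add_distrib]
            simp [Finset.card_univ]
    have e1 : ((∑ j : Fin n, (H i.succ j.succ + 1)/2 : ℤ) : ZMod m) * 2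
        = (n:ZMod m) - 1 := by
      calc ((∑ j : Fin n, (H i.succ j.succ + 1)/2 : ℤ) : ZMod m) * 2
          = (((∑ j : Fin n, (H i.succ j.succ + 1)/2) * 2 : ℤ) : ZMod m) := by
            push_cast; ring
        _ = (((∑ j : Fin n, H i.succ j.succ) + n : ℤ) : ZMod m) := by rw [e0]
        _ = (∑ j : Fin n, ((H i.succ j.succ : ℤ) : ZMod m)) + n := by push_cast; ring
        _ = (n:ZMod m) - 1 := by rw [hrowC i]; ring
    have e2 : (((2:ℤ)^(t-1) * ((n:ℤ)-1) : ℤ) : ZMod m) * 2 = (n:ZMod m) - 1 := by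
      push_cast
      linear_combination ((n:ZMod m) - 1) * h2φ1
    calc ((∑ j : Fin n, (H i.succ j.succ + 1)/2 : ℤ) : ZMod m) * 2
        = (n:ZMod m) - 1 := e1
      _ = (((2:ℤ)^(t-1) * ((n:ℤ)-1) : ℤ) : ZMod m) * 2 := e2.symm
  · -- column sums
    intro j
    rw [← ZMod.intCast_eq_intCast_iff]
    simp only [Matrix.of_apply]
    refine hu2.mul_right_cancel ?_
    have e0 : (∑ i : Fin n, (H i.succ j.succ + 1)/2 : ℤ) * 2
        = (∑ i : Fin n, H i.succ j.succ) + n := by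
      calc (∑ i : Fin n, (H i.succ j.succ + 1)/2 : ℤ) * 2
          = ∑ i : Fin n, (H i.succ j.succ + 1) := by
            rw [Finset.sum_mul]
            exact Finset.sum_congr rfl fun i _ => by rw [mul_comm]; exact hD2 i j
        _ = (∑ i : Fin n, H i.succ j.succ) + n := by
            rw [Finset.sum_add_distrib]
            simp [Finset.card_univ]
    have e1 : ((∑ i : Fin n, (H i.succ j.succ + 1)/2 : ℤ) : ZMod m) * 2
        = (n:ZMod m) - 1 := by
      calc ((∑ i : Fin n, (H i.succ j.succ + 1)/2 : ℤ) : ZMod m) * 2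
          = (((∑ i : Fin n, (H i.succ j.succ + 1)/2) * 2 : ℤ) : ZMod m) := by
            push_cast; ring
        _ = (((∑ i : Fin n, H i.succ j.succ) + n : ℤ) : ZMod m) := by rw [e0]
        _ = (∑ i : Fin n, ((H i.succ j.succ : ℤ) : ZMod m)) + n := by push_cast; ring
        _ = (n:ZMod m) - 1 := by rw [hcolC j]; ring
    have e2 : (((2:ℤ)^(t-1) * ((n:ℤ)-1) : ℤ) : ZMod m) * 2 = (n:ZMod m) - 1 := by
      push_cast
      linear_combination ((n:ZMod m) - 1) * h2φ1
    calc ((∑ i : Fin n, (H i.succ j.succ + 1)/2 : ℤ) : ZMod m) * 2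
        = (n:ZMod m) - 1 := e1
      _ = (((2:ℤ)^(t-1) * ((n:ℤ)-1) : ℤ) : ZMod m) * 2 := e2.symm
  · -- inner products
    intro i j
    rw [← ZMod.intCast_eq_intCast_iff]
    refine hu4.mul_right_cancel ?_
    have h4e : ∀ l : Fin n, ((H i.succ l.succ + 1)/2) * ((H j.succ l.succ + 1)/2) * 4
        = (H i.succ l.succ * H j.succ l.succ) + H i.succ l.succ + H j.succ l.succ + 1 := by
      intro l
      rcases hpm i.succ l.succ with h|h <;> rcases hpm j.succ l.succ with h'|h' <;>
        rw [h, h'] <;> norm_num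
    have hmulapp : (H*Hᵀ) i.succ j.succ
        = 1 + ∑ l : Fin n, H i.succ l.succ * H j.succ l.succ := by
      rw [Matrix.mul_apply, Fin.sum_univ_succ]
      simp [Matrix.transpose_apply, hcol]
    have eZ : (∑ l : Fin n, ((H i.succ l.succ + 1)/2) * ((H j.succ l.succ + 1)/2)) * 4
        = ((H*Hᵀ) i.succ j.succ - 1) + (∑ l : Fin n, H i.succ l.succ)
          + (∑ l : Fin n, H j.succ l.succ) + n := by
      rw [Finset.sum_mul, Finset.sum_congr rfl (fun l _ => h4e l), hmulapp,
        Finset.sum_add_distrib, Finset.sum_add_distrib, Finset.sum_add_distrib]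
      simp [Finset.card_univ]
    have hDD : ((Matrix.of fun i j : Fin n => (H i.succ j.succ + 1) / 2) *
        (Matrix.of fun i j : Fin n => (H i.succ j.succ + 1) / 2)ᵀ) i j
        = ∑ l : Fin n, ((H i.succ l.succ + 1)/2) * ((H j.succ l.succ + 1)/2) := by
      rw [Matrix.mul_apply]
      simp [Matrix.transpose_apply]
    have e1 : ((((Matrix.of fun i j : Fin n => (H i.succ j.succ + 1) / 2) *
        (Matrix.of fun i j : Fin n => (H i.succ j.succ + 1) / 2)ᵀ) i j : ℤ) : ZMod m) * 4
        = (if i = j then (n:ZMod m)+1 else 0) + (n:ZMod m) - 3 := by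
      rw [hDD]
      calc ((∑ l : Fin n, ((H i.succ l.succ + 1)/2) * ((H j.succ l.succ + 1)/2) : ℤ) : ZMod m) * 4
          = (((∑ l : Fin n, ((H i.succ l.succ + 1)/2) * ((H j.succ l.succ + 1)/2)) * 4 : ℤ) : ZMod m) := by
            push_cast; ring
        _ = ((((H*Hᵀ) i.succ j.succ - 1) + (∑ l : Fin n, H i.succ l.succ)
              + (∑ l : Fin n, H j.succ l.succ) + n : ℤ) : ZMod m) := by rw [eZ]
        _ = (((H*Hᵀ) i.succ j.succ : ℤ) : ZMod m) - 1
              + (∑ l : Fin n, ((H i.succ l.succ : ℤ) : ZMod m))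
              + (∑ l : Fin n, ((H j.succ l.succ : ℤ) : ZMod m)) + n := by push_cast; ring
        _ = (if i = j then (n:ZMod m)+1 else 0) + (n:ZMod m) - 3 := by
            rw [hmap i.succ j.succ, hrowC i, hrowC j]
            simp only [Fin.succ_inj]
            ring
    have e2 : ((((2:ℤ)^(t-1) * ((n:ℤ)-1) - (2:ℤ)^(t-2) * ((n:ℤ)-3))
          * (if i = j then (1:ℤ) else 0) + (2:ℤ)^(t-2) * ((n:ℤ)-3) : ℤ) : ZMod m) * 4
        = (if i = j then (n:ZMod m)+1 else 0) + (n:ZMod m) - 3 := by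
      rcases eq_or_ne i j with rfl|hne
      · simp only [if_pos rfl]
        push_cast
        linear_combination (2*(n:ZMod m) - 2) * h2φ1
      · simp only [if_neg hne]
        push_cast
        linear_combination ((n:ZMod m) - 3) * h4φ2
    exact e1.trans e2.symm
end

section
/- Let D be a (v,k,λ;m) modular symmetric design. Then 2D − J is an m-modular Hadamard matrix of order v if and only if v ≡ 4(k−λ) (mod m). -/
open Matrix

theorem stmt_16 (m v : ℕ) (hm : 2 ≤ m) (hv : 2 ≤ v) (k lam : ℤ)
    (D : Matrix (Fin v) (Fin v) ℤ) (hD : IsMDesign m k lam D) :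
    IsMHadamard m v (2 • D - Matrix.of fun _ _ : Fin v => (1 : ℤ)) ↔
      (v : ℤ) ≡ 4 * (k - lam) [ZMOD m] := by
  obtain ⟨h01, hrow, hcol, hDDt⟩ := hD
  set H : Matrix (Fin v) (Fin v) ℤ := 2 • D - Matrix.of fun _ _ : Fin v => (1 : ℤ)
    with hHdef
  have hent : ∀ a b, H a b = 2 * D a b - 1 := by
    intro a b
    simp [hHdef, Matrix.sub_apply, Matrix.of_apply, two_smul, two_mul]
  have key : ∀ i j : Fin v, (H * Hᵀ) i j
      ≡ 4 * (k - lam) * (if i = j then 1 else 0) - 4 * (k - lam) + v [ZMOD m] := by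
    intro i j
    have heq : (H * Hᵀ) i j
        = 4 * ((D * Dᵀ) i j) - 2 * (∑ l, D i l) - 2 * (∑ l, D j l) + v := by
      simp only [Matrix.mul_apply, Matrix.transpose_apply, hent]
      have step : ∀ l : Fin v, (2 * D i l - 1) * (2 * D j l - 1)
          = 4 * (D i l * D j l) - 2 * D i l - 2 * D j l + 1 := fun l => by ring
      rw [Finset.sum_congr rfl fun l _ => step l]
      simp [Finset.sum_add_distrib, Finset.sum_sub_distrib, Finset.mul_sum,
        Finset.sum_const, Finset.card_univ]
    rw [heq]
    have h1 := (hDDt i j).mul_left 4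
    have h2 := (hrow i).mul_left 2
    have h3 := (hrow j).mul_left 2
    have h4 := ((h1.sub h2).sub h3).add_right (v : ℤ)
    have hr : 4 * ((k - lam) * (if i = j then 1 else 0) + lam) - 2 * k - 2 * k + v
        = 4 * (k - lam) * (if i = j then 1 else 0) - 4 * (k - lam) + v := by ring
    exact hr ▸ h4
  constructor
  · rintro ⟨_, hH⟩
    have hne : (⟨0, by omega⟩ : Fin v) ≠ ⟨1, by omega⟩ := by
      intro h; simpa using congrArg Fin.val h
    have h1 := hH ⟨0, by omega⟩ ⟨1, by omega⟩
    have h2 := key ⟨0, by omega⟩ ⟨1, by omega⟩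
    rw [if_neg hne] at h1 h2
    have h3 := (h2.symm.trans h1).add_right (4 * (k - lam))
    calc (v : ℤ) = (4 * (k - lam) * 0 - 4 * (k - lam) + v) + 4 * (k - lam) := by ring
      _ ≡ 0 + 4 * (k - lam) [ZMOD m] := h3
      _ = 4 * (k - lam) := by ring
  · intro hv4
    refine ⟨fun i j => ?_, fun i j => ?_⟩
    · rw [hent]
      rcases h01 i j with h | h <;> rw [h] <;> norm_num
    · refine (key i j).trans ?_
      by_cases h : i = j
      · rw [if_pos h, if_pos h]
        have : 4 * (k - lam) * 1 - 4 * (k - lam) + (v : ℤ) = v := by ring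
        rw [this]
      · rw [if_neg h, if_neg h]
        calc 4 * (k - lam) * 0 - 4 * (k - lam) + (v : ℤ)
            = (v : ℤ) - 4 * (k - lam) := by ring
          _ ≡ 4 * (k - lam) - 4 * (k - lam) [ZMOD m] := hv4.sub_right _
          _ = 0 := by ring
end

section
/- Let v₁, v₂ ≥ 2 and let D₁, D₂ be (v₁,k₁,λ₁;m) and (v₂,k₂,λ₂;m) modular symmetric designs. Define the direct sum D₁ ⊕ D₂ as the block matrix [[D₁, J],[Jᵀ, D₂]] of size v₁+v₂. Then 2(D₁ ⊕ D₂) − J is an m-modular Hadamard matrix of order v₁+v₂ if and only if v₂ ≡ −v₁ + 4k₁ − 4λ₁ (mod m), 2k₂ ≡ 2k₁ − 4λ₁ (mod m), and 4λ₂ ≡ −4λ₁ (mod m). -/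
open Matrix

private lemma sum_expand2 {R : Type*} [CommRing R] {α : Type*} (s : Finset α) (f g : α → R) :
    ∑ t ∈ s, (2*f t - 1)*(2*g t - 1)
      = 4*(∑ t ∈ s, f t * g t) - 2*(∑ t ∈ s, f t) - 2*(∑ t ∈ s, g t) + s.card := by
  rw [Finset.sum_congr rfl
    (fun t _ => (by ring : (2*f t - 1)*(2*g t - 1) = 4*(f t*g t) - 2*f t - 2*g t + 1))]
  simp [Finset.sum_add_distrib, Finset.sum_sub_distrib, ← Finset.mul_sum]

private lemma sum_expand1 {R : Type*} [CommRing R] {α : Type*} (s : Finset α) (f : α → R) :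
    ∑ t ∈ s, (2*f t - 1) = 2*(∑ t ∈ s, f t) - s.card := by
  simp [Finset.sum_sub_distrib, ← Finset.mul_sum]

theorem stmt_17 (m v₁ v₂ : ℕ) (hm : 2 ≤ m) (hv₁ : 2 ≤ v₁) (hv₂ : 2 ≤ v₂)
    (k₁ k₂ l₁ l₂ : ℤ)
    (D₁ : Matrix (Fin v₁) (Fin v₁) ℤ) (D₂ : Matrix (Fin v₂) (Fin v₂) ℤ)
    (hD₁ : IsMDesign m k₁ l₁ D₁) (hD₂ : IsMDesign m k₂ l₂ D₂) :
    IsMHadamard m (v₁ + v₂)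
      (2 • (Matrix.fromBlocks D₁ (Matrix.of fun _ _ => (1 : ℤ))
          (Matrix.of fun _ _ => (1 : ℤ)) D₂) -
        Matrix.of fun _ _ : Fin v₁ ⊕ Fin v₂ => (1 : ℤ)) ↔
      ((v₂ : ℤ) ≡ -(v₁ : ℤ) + 4 * k₁ - 4 * l₁ [ZMOD m] ∧
        2 * k₂ ≡ 2 * k₁ - 4 * l₁ [ZMOD m] ∧
        4 * l₂ ≡ -(4 * l₁) [ZMOD m]) := by
  obtain ⟨hD₁01, hr₁, hc₁, hdd₁⟩ := hD₁
  obtain ⟨hD₂01, hr₂, hc₂, hdd₂⟩ := hD₂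
  set H : Matrix (Fin v₁ ⊕ Fin v₂) (Fin v₁ ⊕ Fin v₂) ℤ :=
    2 • (Matrix.fromBlocks D₁ (Matrix.of fun _ _ => (1 : ℤ))
          (Matrix.of fun _ _ => (1 : ℤ)) D₂) -
        Matrix.of fun _ _ : Fin v₁ ⊕ Fin v₂ => (1 : ℤ) with hH
  -- entry formulas
  have hE : ∀ i j, H i j = 2 * (Matrix.fromBlocks D₁ (Matrix.of fun _ _ => (1 : ℤ))
      (Matrix.of fun _ _ => (1 : ℤ)) D₂) i j - 1 := by
    intro i j
    rw [hH, Matrix.sub_apply, Matrix.smul_apply, nsmul_eq_mul]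
    norm_num
  -- the ±1 property always holds
  have hpm : ∀ i j, H i j = 1 ∨ H i j = -1 := by
    rintro (i|i) (j|j) <;> rw [hE] <;>
      simp only [Matrix.fromBlocks_apply₁₁, Matrix.fromBlocks_apply₁₂,
        Matrix.fromBlocks_apply₂₁, Matrix.fromBlocks_apply₂₂, Matrix.of_apply]
    · rcases hD₁01 i j with h | h <;> simp [h]
    · norm_num
    · norm_num
    · rcases hD₂01 i j with h | h <;> simp [h]
  -- exact entry formulas of H * Hᵀ over ℤ
  have E11 : ∀ i j : Fin v₁, (H * Hᵀ) (Sum.inl i) (Sum.inl j)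
      = 4*(D₁*D₁ᵀ) i j - 2*(∑ t, D₁ i t) - 2*(∑ t, D₁ j t) + v₁ + v₂ := by
    intro i j
    rw [Matrix.mul_apply, Fintype.sum_sum_type]
    simp only [Matrix.transpose_apply, hE, Matrix.fromBlocks_apply₁₁,
      Matrix.fromBlocks_apply₁₂, Matrix.of_apply]
    rw [sum_expand2 Finset.univ (fun t => D₁ i t) (fun t => D₁ j t),
      sum_expand2 Finset.univ (fun _ => (1:ℤ)) (fun _ => (1:ℤ)), Matrix.mul_apply]
    simp only [Matrix.transpose_apply, Finset.card_univ, Fintype.card_fin, mul_one]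
    push_cast
    ring
  have E22 : ∀ i j : Fin v₂, (H * Hᵀ) (Sum.inr i) (Sum.inr j)
      = 4*(D₂*D₂ᵀ) i j - 2*(∑ t, D₂ i t) - 2*(∑ t, D₂ j t) + v₁ + v₂ := by
    intro i j
    rw [Matrix.mul_apply, Fintype.sum_sum_type]
    simp only [Matrix.transpose_apply, hE, Matrix.fromBlocks_apply₂₁,
      Matrix.fromBlocks_apply₂₂, Matrix.of_apply]
    rw [sum_expand2 Finset.univ (fun _ => (1:ℤ)) (fun _ => (1:ℤ)),
      sum_expand2 Finset.univ (fun t => D₂ i t) (fun t => D₂ j t), Matrix.mul_apply]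
    simp only [Matrix.transpose_apply, Finset.card_univ, Fintype.card_fin, mul_one]
    push_cast
    ring
  have E12 : ∀ (i : Fin v₁) (j : Fin v₂), (H * Hᵀ) (Sum.inl i) (Sum.inr j)
      = 2*(∑ t, D₁ i t) + 2*(∑ t, D₂ j t) - v₁ - v₂ := by
    intro i j
    rw [Matrix.mul_apply, Fintype.sum_sum_type]
    simp only [Matrix.transpose_apply, hE, Matrix.fromBlocks_apply₁₁,
      Matrix.fromBlocks_apply₁₂, Matrix.fromBlocks_apply₂₁, Matrix.fromBlocks_apply₂₂,
      Matrix.of_apply]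
    rw [sum_expand2 Finset.univ (fun t => D₁ i t) (fun _ => (1:ℤ)),
      sum_expand2 Finset.univ (fun _ => (1:ℤ)) (fun t => D₂ j t)]
    simp only [mul_one, one_mul, Finset.sum_const, Finset.card_univ, Fintype.card_fin,
      nsmul_eq_mul]
    push_cast
    ring
  have E21 : ∀ (i : Fin v₂) (j : Fin v₁), (H * Hᵀ) (Sum.inr i) (Sum.inl j)
      = 2*(∑ t, D₂ i t) + 2*(∑ t, D₁ j t) - v₁ - v₂ := by
    intro i j
    rw [Matrix.mul_apply, Fintype.sum_sum_type]
    simp only [Matrix.transpose_apply, hE, Matrix.fromBlocks_apply₁₁,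
      Matrix.fromBlocks_apply₁₂, Matrix.fromBlocks_apply₂₁, Matrix.fromBlocks_apply₂₂,
      Matrix.of_apply]
    rw [sum_expand2 Finset.univ (fun _ => (1:ℤ)) (fun t => D₁ j t),
      sum_expand2 Finset.univ (fun t => D₂ i t) (fun _ => (1:ℤ))]
    simp only [mul_one, one_mul, Finset.sum_const, Finset.card_univ, Fintype.card_fin,
      nsmul_eq_mul]
    push_cast
    ring
  -- hypotheses in ZMod m
  have p₁ : ∀ i j : Fin v₁, (((D₁*D₁ᵀ) i j : ℤ) : ZMod m)
      = ((k₁ : ZMod m) - l₁) * (if i = j then 1 else 0) + l₁ := by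
    intro i j
    have h := (ZMod.intCast_eq_intCast_iff _ _ _).mpr (hdd₁ i j)
    rw [h]
    push_cast [apply_ite (fun x : ℤ => (x : ZMod m))]
    rfl
  have p₂ : ∀ i j : Fin v₂, (((D₂*D₂ᵀ) i j : ℤ) : ZMod m)
      = ((k₂ : ZMod m) - l₂) * (if i = j then 1 else 0) + l₂ := by
    intro i j
    have h := (ZMod.intCast_eq_intCast_iff _ _ _).mpr (hdd₂ i j)
    rw [h]
    push_cast [apply_ite (fun x : ℤ => (x : ZMod m))]
    rfl
  have s₁ : ∀ i : Fin v₁, (∑ t, ((D₁ i t : ℤ) : ZMod m)) = (k₁ : ZMod m) := by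
    intro i
    have h := (ZMod.intCast_eq_intCast_iff _ _ _).mpr (hr₁ i)
    push_cast at h
    exact h
  have s₂ : ∀ i : Fin v₂, (∑ t, ((D₂ i t : ℤ) : ZMod m)) = (k₂ : ZMod m) := by
    intro i
    have h := (ZMod.intCast_eq_intCast_iff _ _ _).mpr (hr₂ i)
    push_cast at h
    exact h
  constructor
  · rintro ⟨-, hprod⟩
    set a₁ : Fin v₁ := ⟨0, by omega⟩
    set b₁ : Fin v₁ := ⟨1, by omega⟩
    set a₂ : Fin v₂ := ⟨0, by omega⟩
    set b₂ : Fin v₂ := ⟨1, by omega⟩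
    have hab₁ : a₁ ≠ b₁ := by simp [a₁, b₁, Fin.ext_iff]
    have hab₂ : a₂ ≠ b₂ := by simp [a₂, b₂, Fin.ext_iff]
    -- off-diagonal in block (1,1)
    have h1 := (ZMod.intCast_eq_intCast_iff _ _ _).mpr (hprod (Sum.inl a₁) (Sum.inl b₁))
    rw [E11] at h1
    simp only [Sum.inl.injEq, if_neg hab₁] at h1
    push_cast at h1
    rw [p₁ a₁ b₁, if_neg hab₁, s₁ a₁, s₁ b₁] at h1
    -- mixed block
    have h2 := (ZMod.intCast_eq_intCast_iff _ _ _).mpr (hprod (Sum.inl a₁) (Sum.inr a₂))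
    rw [E12] at h2
    simp only [reduceCtorEq, if_false] at h2
    push_cast at h2
    rw [s₁ a₁, s₂ a₂] at h2
    -- off-diagonal in block (2,2)
    have h3 := (ZMod.intCast_eq_intCast_iff _ _ _).mpr (hprod (Sum.inr a₂) (Sum.inr b₂))
    rw [E22] at h3
    simp only [Sum.inr.injEq, if_neg hab₂] at h3
    push_cast at h3
    rw [p₂ a₂ b₂, if_neg hab₂, s₂ a₂, s₂ b₂] at h3
    refine ⟨?_, ?_, ?_⟩
    · apply (ZMod.intCast_eq_intCast_iff _ _ _).mp
      push_cast
      linear_combination h1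
    · apply (ZMod.intCast_eq_intCast_iff _ _ _).mp
      push_cast
      linear_combination h1 + h2
    · apply (ZMod.intCast_eq_intCast_iff _ _ _).mp
      push_cast
      linear_combination h1 + 2 * h2 + h3
  · rintro ⟨hc1, hc2, hc3⟩
    have c1 := (ZMod.intCast_eq_intCast_iff _ _ _).mpr hc1
    have c2 := (ZMod.intCast_eq_intCast_iff _ _ _).mpr hc2
    have c3 := (ZMod.intCast_eq_intCast_iff _ _ _).mpr hc3
    push_cast at c1 c2 c3
    refine ⟨hpm, ?_⟩
    rintro (i|i) (j|j) <;> apply (ZMod.intCast_eq_intCast_iff _ _ _).mp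
    · rw [E11]
      by_cases hij : i = j
      · subst hij
        simp only [if_pos rfl]
        push_cast
        rw [p₁ i i, if_pos rfl, s₁ i]
        ring
      · rw [if_neg (by simpa using hij)]
        push_cast
        rw [p₁ i j, if_neg hij, s₁ i, s₁ j]
        linear_combination c1
    · rw [if_neg (by simp), E12]
      push_cast
      rw [s₁ i, s₂ j]
      linear_combination c2 - c1
    · rw [if_neg (by simp), E21]
      push_cast
      rw [s₂ i, s₁ j]
      linear_combination c2 - c1
    · rw [E22]
      by_cases hij : i = j
      · subst hij
        simp only [if_pos rfl]
        push_cast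
        rw [p₂ i i, if_pos rfl, s₂ i]
        ring
      · rw [if_neg (by simpa using hij)]
        push_cast
        rw [p₂ i j, if_neg hij, s₂ i, s₂ j]
        linear_combination c1 - 2 * c2 + c3
end
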